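/- Let P be a convex body and for t ≥ 0 define the truncation P_t = P ∩ {x : x·u₀ ≤ h_P(u₀) − t} for a fixed unit vector u₀. If F(P, u₀) is not a facet of the polytope P (the support set in direction u₀ has dimension ≤ n−2), then for all sufficiently small t > 0, h_{P_t}(u_i) = h_P(u_i) for every facet normal u_i ≠ u₀ of P, while h_{P_t}(u₀) = h_P(u₀) − t. -/

import Mathlib

open MeasureTheory

/-- Support function of a set. -/
noncomputable def suppFn {n : ℕ} (P : Set (EuclideanSpace ℝ (Fin n)))
    (v : EuclideanSpace ℝ (Fin n)) : ℝ :=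
  sSup ((fun x => (inner ℝ x v : ℝ)) '' P)

/-!
A facet `F(P, uᵢ)` has positive `(n-1)`-dimensional measure, so it is not contained in the
null face `F(P, u₀)`: it contains a point `xᵢ` strictly below the level `h = h_P(u₀)`. Cutting at
a depth `t` smaller than every gap `h - ⟪xᵢ, u₀⟫` keeps all the `xᵢ`, hence all the support values
`h_P(uᵢ)`. Since `P` is convex and not contained in the hyperplane `⟪·, u₀⟫ = h`, the linear
functional `⟪·, u₀⟫` takes every value between some `⟪y, u₀⟫ < h` and `h` on `P`, so the level
`h - t` is still attained on the truncation.
-/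

open scoped RealInnerProductSpace Topology

def supportSet {n : ℕ} (P : Set (EuclideanSpace ℝ (Fin n))) (v : EuclideanSpace ℝ (Fin n)) :
    Set (EuclideanSpace ℝ (Fin n)) :=
  P ∩ {x | ⟪x, v⟫ = suppFn P v}

section SupportFunction

variable {n : ℕ} {P Q : Set (EuclideanSpace ℝ (Fin n))} {u v x y : EuclideanSpace ℝ (Fin n)}

lemma suppFn_eq_of_mem_of_forall_le {c : ℝ} (hx : x ∈ P) (hxv : ⟪x, v⟫ = c)
    (hle : ∀ y ∈ P, ⟪y, v⟫ ≤ c) : suppFn P v = c :=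
  IsGreatest.csSup_eq ⟨⟨x, hx, hxv⟩, by rintro _ ⟨y, hy, rfl⟩; exact hle y hy⟩

lemma le_suppFn (hP : IsCompact P) (v : EuclideanSpace ℝ (Fin n)) (hx : x ∈ P) :
    ⟪x, v⟫ ≤ suppFn P v :=
  le_csSup (hP.image (continuous_id.inner continuous_const)).bddAbove (Set.mem_image_of_mem _ hx)

lemma IsCompact.exists_mem_supportSet (hP : IsCompact P) (hne : P.Nonempty)
    (v : EuclideanSpace ℝ (Fin n)) : ∃ x, x ∈ supportSet P v := by
  obtain ⟨x, hxP, hmax⟩ := hP.exists_isMaxOn (f := fun y => ⟪y, v⟫) hne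
    (continuous_id.inner continuous_const).continuousOn
  exact ⟨x, hxP, (suppFn_eq_of_mem_of_forall_le hxP rfl fun _ hy => hmax hy).symm⟩

lemma suppFn_eq_of_subset_of_mem_supportSet (hP : IsCompact P) (hQP : Q ⊆ P)
    (hxQ : x ∈ Q) (hx : x ∈ supportSet P v) : suppFn Q v = suppFn P v :=
  suppFn_eq_of_mem_of_forall_le hxQ hx.2 fun _ hy => le_suppFn hP v (hQP hy)

lemma suppFn_inter_halfSpace_self {c : ℝ} (hx : x ∈ P) (hxu : ⟪x, u⟫ = c) :
    suppFn (P ∩ {y | ⟪y, u⟫ ≤ c}) u = c :=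
  suppFn_eq_of_mem_of_forall_le ⟨hx, hxu.le⟩ hxu fun _ hy => hy.2

lemma exists_mem_inner_eq_of_le_suppFn (hP : IsCompact P) (hconv : Convex ℝ P) (hy : y ∈ P)
    {c : ℝ} (hyc : ⟪y, u⟫ ≤ c) (hc : c ≤ suppFn P u) :
    ∃ x ∈ P, ⟪x, u⟫ = c := by
  obtain ⟨z, hzP, hzu⟩ := hP.exists_mem_supportSet ⟨y, hy⟩ u
  exact hconv.isPreconnected.intermediate_value hy hzP
    (continuous_id.inner continuous_const).continuousOn ⟨hyc, hzu ▸ hc⟩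

lemma exists_mem_inner_lt_of_mem_interior (hx : x ∈ interior P) (hv : v ≠ 0) :
    ∃ y ∈ P, ⟪y, v⟫ < ⟪x, v⟫ := by
  have hcont : Continuous fun ε : ℝ => x - ε • v := by fun_prop
  have hmem : ∀ᶠ ε in 𝓝[>] (0 : ℝ), x - ε • v ∈ interior P :=
    nhdsWithin_le_nhds <| hcont.continuousAt.preimage_mem_nhds (by
      simpa using isOpen_interior.mem_nhds hx)
  obtain ⟨ε, hεP, hε⟩ := (hmem.and self_mem_nhdsWithin).exists
  refine ⟨x - ε • v, interior_subset hεP, ?_⟩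
  have hvv : 0 < ⟪v, v⟫ := real_inner_self_pos.2 hv
  rw [inner_sub_left, real_inner_smul_left]
  nlinarith [mul_pos (Set.mem_Ioi.1 hε) hvv]

lemma exists_mem_supportSet_inner_lt_suppFn (hP : IsCompact P)
    {μ : Measure (EuclideanSpace ℝ (Fin n))} (hu : μ (supportSet P u) = 0)
    (hv : 0 < μ (supportSet P v)) : ∃ x ∈ supportSet P v, ⟪x, u⟫ < suppFn P u := by
  by_contra! hcon
  have hsub : supportSet P v ⊆ supportSet P u := fun x hx =>
    ⟨hx.1, le_antisymm (le_suppFn hP u hx.1) (hcon x hx)⟩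
  exact (measure_mono hsub).trans hu.le |>.not_gt hv

end SupportFunction

lemma convex_iInter_halfSpace {n N : ℕ} (u : Fin N → EuclideanSpace ℝ (Fin n)) (a : Fin N → ℝ) :
    Convex ℝ (⋂ i, {x | ⟪x, u i⟫ ≤ a i}) :=
  convex_iInter fun _ =>
    convex_halfSpace_le ⟨fun x y => inner_add_left x y _, fun c x => real_inner_smul_left x _ c⟩ _

theorem truncation_support_function_general
    (n N : ℕ)
    (u : Fin N → EuclideanSpace ℝ (Fin n))
    (a : Fin N → ℝ)
    (P : Set (EuclideanSpace ℝ (Fin n)))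
    (hP : P = ⋂ i : Fin N, {x | (inner ℝ x (u i) : ℝ) ≤ a i})
    (hPcpt : IsCompact P) (hPint : (interior P).Nonempty)
    -- the u i are facet normals of P
    (hfacets : ∀ i, 0 < μH[(n : ℝ) - 1]
      (P ∩ {x | (inner ℝ x (u i) : ℝ) = suppFn P (u i)}))
    (u₀ : EuclideanSpace ℝ (Fin n)) (hu₀ : ‖u₀‖ = 1)
    -- the support set F(P, u₀) is not a facet
    (hnotfacet : μH[(n : ℝ) - 1]
      (P ∩ {x | (inner ℝ x u₀ : ℝ) = suppFn P u₀}) = 0) :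
    ∃ ε > 0, ∀ t ∈ Set.Ioo (0 : ℝ) ε,
      (∀ i, u i ≠ u₀ →
        suppFn (P ∩ {x | (inner ℝ x u₀ : ℝ) ≤ suppFn P u₀ - t}) (u i) = suppFn P (u i)) ∧
      suppFn (P ∩ {x | (inner ℝ x u₀ : ℝ) ≤ suppFn P u₀ - t}) u₀ = suppFn P u₀ - t := by
  obtain ⟨x₀, hx₀⟩ := hPint
  obtain ⟨y, hyP, hy⟩ :=
    exists_mem_inner_lt_of_mem_interior hx₀ (norm_ne_zero_iff.1 (hu₀ ▸ one_ne_zero))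
  replace hy : ⟪y, u₀⟫ < suppFn P u₀ := hy.trans_le (le_suppFn hPcpt u₀ (interior_subset hx₀))
  choose x hx hxh using fun i => exists_mem_supportSet_inner_lt_suppFn hPcpt hnotfacet (hfacets i)
  have hsmall : ∀ᶠ t in 𝓝 (0 : ℝ), t < suppFn P u₀ - ⟪y, u₀⟫ ∧ ∀ i, t < suppFn P u₀ - ⟪x i, u₀⟫ :=
    (eventually_lt_nhds (by linarith)).and
      (Filter.eventually_all.2 fun i => eventually_lt_nhds (by linarith [hxh i]))
  obtain ⟨ε, hε, hsmallε⟩ := Metric.eventually_nhds_iff.1 hsmall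
  refine ⟨ε, hε, fun t ⟨ht₀, htε⟩ => ?_⟩
  obtain ⟨hty, htx⟩ := hsmallε (y := t) (by simpa [abs_of_pos ht₀] using htε)
  obtain ⟨z, hzP, hz⟩ := exists_mem_inner_eq_of_le_suppFn hPcpt (hP ▸ convex_iInter_halfSpace u a)
    hyP (c := suppFn P u₀ - t) (by linarith) (by linarith)
  refine ⟨fun i _ => ?_, suppFn_inter_halfSpace_self hzP hz⟩
  exact suppFn_eq_of_subset_of_mem_supportSet hPcpt Set.inter_subset_left
    ⟨(hx i).1, le_sub_comm.1 (htx i).le⟩ (hx i)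

theorem truncation_support_function
    (n N : ℕ) (hn : 0 < n)
    (u : Fin N → EuclideanSpace ℝ (Fin n)) (hunit : ∀ i, ‖u i‖ = 1)
    (a : Fin N → ℝ)
    (P : Set (EuclideanSpace ℝ (Fin n)))
    (hP : P = ⋂ i : Fin N, {x | (inner ℝ x (u i) : ℝ) ≤ a i})
    (hPcpt : IsCompact P) (hPint : (interior P).Nonempty)
    -- the u i are facet normals of P
    (hfacets : ∀ i, 0 < μH[(n : ℝ) - 1]
      (P ∩ {x | (inner ℝ x (u i) : ℝ) = suppFn P (u i)}))
    (u₀ : EuclideanSpace ℝ (Fin n)) (hu₀ : ‖u₀‖ = 1)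
    -- the support set F(P, u₀) is not a facet
    (hnotfacet : μH[(n : ℝ) - 1]
      (P ∩ {x | (inner ℝ x u₀ : ℝ) = suppFn P u₀}) = 0) :
    ∃ ε > 0, ∀ t ∈ Set.Ioo (0 : ℝ) ε,
      (∀ i, u i ≠ u₀ →
        suppFn (P ∩ {x | (inner ℝ x u₀ : ℝ) ≤ suppFn P u₀ - t}) (u i) = suppFn P (u i)) ∧
      suppFn (P ∩ {x | (inner ℝ x u₀ : ℝ) ≤ suppFn P u₀ - t}) u₀ = suppFn P u₀ - t :=
  truncation_support_function_general n N u a P hP hPcpt hPint hfacets u₀ hu₀ hnotfacet
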